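/- Let H > 0, γ_s > 0, and real numbers x_l, y_l, δ, ξ. Define d² = H² + x_l² + y_l², x' = x_l + δ, y' = y_l + ξ. Then log(1 + γ_s/(H² + x'² + y'²)) ≥ log(1 + γ_s/d²) - γ_s·(δ² + ξ² + 2x_l·δ + 2y_l·ξ) / ((d² + γ_s)·d²). -/

import Mathlib

open Real

/-- `x ↦ log (1 + γ / x)` is convex on `(0, ∞)`, so it lies above its tangent line at `b`;
the gap is `log u - (1 - u⁻¹) ≥ 0` for `u` the ratio of the two values of `1 + γ / x`, plus the
nonnegative term `γ (a - b)² / ((a + γ) (b + γ) b)`. -/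
theorem log_one_add_div_tangent_le {a b γ : ℝ} (ha : 0 < a) (hb : 0 < b) (hγ : 0 ≤ γ) :
    log (1 + γ / b) - γ * (a - b) / ((b + γ) * b) ≤ log (1 + γ / a) := by
  have hpa : 0 < 1 + γ / a := by positivity
  have hpb : 0 < 1 + γ / b := by positivity
  have hlog := one_sub_inv_le_log_of_pos (div_pos hpa hpb)
  rw [log_div hpa.ne' hpb.ne', inv_div] at hlog
  have hgap : 1 - (1 + γ / b) / (1 + γ / a) + γ * (a - b) / ((b + γ) * b) =
      γ * (a - b) ^ 2 / ((a + γ) * (b + γ) * b) := by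
    field_simp
    ring
  have hgap_nonneg : 0 ≤ γ * (a - b) ^ 2 / ((a + γ) * (b + γ) * b) := by positivity
  linarith

theorem stmt_2 (H γs xl yl δ ξ : ℝ) (hH : H > 0) (hγ : γs > 0) :
    Real.log (1 + γs / (H ^ 2 + (xl + δ) ^ 2 + (yl + ξ) ^ 2)) ≥
      Real.log (1 + γs / (H ^ 2 + xl ^ 2 + yl ^ 2)) -
        γs * (δ ^ 2 + ξ ^ 2 + 2 * xl * δ + 2 * yl * ξ) /
          (((H ^ 2 + xl ^ 2 + yl ^ 2) + γs) * (H ^ 2 + xl ^ 2 + yl ^ 2)) := by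
  have hd : 0 < H ^ 2 + xl ^ 2 + yl ^ 2 := by positivity
  have hd' : 0 < H ^ 2 + (xl + δ) ^ 2 + (yl + ξ) ^ 2 := by positivity
  convert log_one_add_div_tangent_le hd' hd hγ.le using 4
  ring
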